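/- Let A be a finite-dimensional Frobenius algebra over a field K with Frobenius comultiplication δ. Let M be a right A-module and N a left A-module, and let M □ N be their cotensor product (the kernel of φ = (∇_m ⊗ id_N) − (id_M ⊗ ∇_n) : M ⊗ N → M ⊗ A ⊗ N, where ∇_m and ∇_n are the induced comodule structures). Let D be the left A^e-submodule of A ⊗ A generated by T(δ(1_A)), and give N ⊗ M the left A^e-module structure (a ⊗ b)·(y ⊗ x) = (a·y) ⊗ (x·b). Then the map f ↦ f(T(δ(1_A))) is a K-vector space isomorphism Hom_{A^e}(D, N ⊗ M) ≅ M □ N. -/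
import Mathlib


open TensorProduct

variable {K : Type*} [Field K] {A : Type*} [Ring A] [Algebra K A]

/-- `D`: the left `A^e`-submodule of `A ⊗ A` generated by `T(δ(1))`, where
`A^e = A ⊗ A^op` acts by `(a ⊗ b) · (u ⊗ v) = (a u) ⊗ (v b)` and `T` is the flip.
As a subspace, it is the `K`-span of the orbit of `T(δ(1))` under the action. -/
noncomputable def Dsub (δ : A →ₗ[K] A ⊗[K] A) : Submodule K (A ⊗[K] A) :=
  Submodule.span K
    {y : A ⊗[K] A | ∃ a b : A,
      y = (TensorProduct.map (LinearMap.mulLeft K a) (LinearMap.mulRight K b))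
            ((TensorProduct.comm K A A) (δ 1))}

lemma Tdelta_mem_Dsub (δ : A →ₗ[K] A ⊗[K] A) :
    (TensorProduct.comm K A A) (δ 1) ∈ Dsub δ := by
  apply Submodule.subset_span
  refine ⟨1, 1, ?_⟩
  simp [LinearMap.mulLeft_one, LinearMap.mulRight_one]

lemma Dsub_action_mem (δ : A →ₗ[K] A ⊗[K] A) (a b : A) {u : A ⊗[K] A}
    (hu : u ∈ Dsub δ) :
    (TensorProduct.map (LinearMap.mulLeft K a) (LinearMap.mulRight K b)) u ∈ Dsub δ := by
  induction hu using Submodule.span_induction with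
  | mem y hy =>
      obtain ⟨c, d, rfl⟩ := hy
      apply Submodule.subset_span
      refine ⟨a * c, d * b, ?_⟩
      rw [LinearMap.mulLeft_mul, LinearMap.mulRight_mul, TensorProduct.map_comp,
        LinearMap.comp_apply]
  | zero => simp only [map_zero]; exact (Dsub δ).zero_mem
  | add x y _ _ hx hy => rw [map_add]; exact (Dsub δ).add_mem hx hy
  | smul c x _ hx => rw [map_smul]; exact (Dsub δ).smul_mem c hx

/-- The operator `y ↦ a · y` on a left `A`-module `(N, n)`. -/
noncomputable def lAct {N : Type*} [AddCommGroup N] [Module K N]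
    (n : A ⊗[K] N →ₗ[K] N) (a : A) : N →ₗ[K] N :=
  n ∘ₗ TensorProduct.mk K A N a

/-- The operator `x ↦ x · b` on a right `A`-module `(M, m)`. -/
noncomputable def rAct {M : Type*} [AddCommGroup M] [Module K M]
    (m : M ⊗[K] A →ₗ[K] M) (b : A) : M →ₗ[K] M :=
  m ∘ₗ (TensorProduct.mk K M A).flip b

/-- The space `Hom_{A^e}(D, N ⊗ M)` of left `A^e`-module homomorphisms from `D` to
`N ⊗ M`, where `A^e` acts on `N ⊗ M` by `(a ⊗ b) · (y ⊗ x) = (a · y) ⊗ (x · b)`. -/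
noncomputable def HomAe (δ : A →ₗ[K] A ⊗[K] A)
    {M : Type*} [AddCommGroup M] [Module K M] (m : M ⊗[K] A →ₗ[K] M)
    {N : Type*} [AddCommGroup N] [Module K N] (n : A ⊗[K] N →ₗ[K] N) :
    Submodule K ((Dsub δ) →ₗ[K] N ⊗[K] M) where
  carrier := {f | ∀ (a b : A) (u : Dsub δ),
    f ⟨(TensorProduct.map (LinearMap.mulLeft K a) (LinearMap.mulRight K b)) u.1,
        Dsub_action_mem δ a b u.2⟩ =
      (TensorProduct.map (lAct n a) (rAct m b)) (f u)}
  add_mem' := by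
    intro f g hf hg a b u
    simp only [LinearMap.add_apply, hf a b u, hg a b u, map_add]
  zero_mem' := by
    intro a b u
    simp only [LinearMap.zero_apply, map_zero]
  smul_mem' := by
    intro c f hf a b u
    simp only [LinearMap.smul_apply, hf a b u, map_smul]

/-- The comodule structure map `∇_m` of a right `A`-module `(M, m)`. -/
noncomputable def nablaR (δ : A →ₗ[K] A ⊗[K] A)
    {M : Type*} [AddCommGroup M] [Module K M] (m : M ⊗[K] A →ₗ[K] M) :
    M →ₗ[K] M ⊗[K] A :=
  (TensorProduct.map m (LinearMap.id : A →ₗ[K] A)) ∘ₗ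
    (TensorProduct.assoc K M A A).symm.toLinearMap ∘ₗ
      (TensorProduct.map (LinearMap.id : M →ₗ[K] M) δ) ∘ₗ
        ((TensorProduct.mk K M A).flip 1)

/-- The comodule structure map `∇_n` of a left `A`-module `(N, n)`. -/
noncomputable def nablaL (δ : A →ₗ[K] A ⊗[K] A)
    {N : Type*} [AddCommGroup N] [Module K N] (n : A ⊗[K] N →ₗ[K] N) :
    N →ₗ[K] A ⊗[K] N :=
  (TensorProduct.map (LinearMap.id : A →ₗ[K] A) n) ∘ₗ
    (TensorProduct.assoc K A A N).toLinearMap ∘ₗ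
      (TensorProduct.map δ (LinearMap.id : N →ₗ[K] N)) ∘ₗ
        (TensorProduct.mk K A N 1)

/-- The map `φ = (∇_m ⊗ id_N) − (id_M ⊗ ∇_n) : M ⊗ N → M ⊗ A ⊗ N` whose kernel is
the cotensor product `M □ N`. -/
noncomputable def cophi (δ : A →ₗ[K] A ⊗[K] A)
    {M : Type*} [AddCommGroup M] [Module K M] (m : M ⊗[K] A →ₗ[K] M)
    {N : Type*} [AddCommGroup N] [Module K N] (n : A ⊗[K] N →ₗ[K] N) :
    M ⊗[K] N →ₗ[K] M ⊗[K] (A ⊗[K] N) :=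
  ((TensorProduct.assoc K M A N).toLinearMap ∘ₗ
      TensorProduct.map (nablaR δ m) (LinearMap.id : N →ₗ[K] N)) -
    TensorProduct.map (LinearMap.id : M →ₗ[K] M) (nablaL δ n)
lemma detect_zero {K : Type*} [Field K] {A : Type*} [AddCommGroup A] [Module K A]
    {P : Type*} [AddCommGroup P] [Module K P] (w : A ⊗[K] P)
    (h : ∀ ξ : Module.Dual K A,
      (TensorProduct.lid K P) ((TensorProduct.map ξ LinearMap.id) w) = 0) : w = 0 := by
  let b := Module.Free.chooseBasis K A
  let E := (TensorProduct.congr b.repr (LinearEquiv.refl K P)).trans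
    (TensorProduct.finsuppScalarLeft K P (Module.Free.ChooseBasisIndex K A))
  have hE : ∀ (w : A ⊗[K] P) i, E w i =
      (TensorProduct.lid K P) ((TensorProduct.map (b.coord i) LinearMap.id) w) := by
    intro w i
    induction w using TensorProduct.induction_on with
    | zero => simp
    | tmul a p => simp [E, Module.Basis.coord_apply]
    | add x y hx hy => simp only [map_add, hx, hy, Finsupp.add_apply]
  have hEw : E w = 0 := by
    ext i
    rw [hE, h (b.coord i)]
    rfl
  have := E.injective (by simpa using hEw)
  simpa using this

lemma comm_map_map {K : Type*} [Field K] {M N M' N' : Type*}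
    [AddCommGroup M] [Module K M] [AddCommGroup N] [Module K N]
    [AddCommGroup M'] [Module K M'] [AddCommGroup N'] [Module K N']
    (f : M →ₗ[K] M') (g : N →ₗ[K] N') (z : M ⊗[K] N) :
    TensorProduct.comm K M' N' (TensorProduct.map f g z) =
      TensorProduct.map g f (TensorProduct.comm K M N z) := by
  induction z using TensorProduct.induction_on with
  | zero => simp
  | tmul x y => simp
  | add x y hx hy => simp [hx, hy]

lemma comm_comm_apply {K : Type*} [Field K] {M N : Type*}
    [AddCommGroup M] [Module K M] [AddCommGroup N] [Module K N] (z : M ⊗[K] N) :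
    TensorProduct.comm K N M (TensorProduct.comm K M N z) = z := by
  induction z using TensorProduct.induction_on with
  | zero => simp
  | tmul x y => simp
  | add x y hx hy => simp [hx, hy]

set_option maxHeartbeats 2000000 in
/-- For a right `A`-module `M` and a left `A`-module `N` over a
Frobenius algebra `A`, the map `f ↦ f(T(δ(1)))` is a `K`-vector space isomorphism
`Hom_{A^e}(D, N ⊗ M) ≅ M □ N`, where `M □ N = ker φ` is the cotensor product
(an element of `N ⊗ M` is identified with an element of `M ⊗ N` by the flip). -/
theorem cotensor_iso_hom_from_D
    [FiniteDimensional K A]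
    (δ : A →ₗ[K] A ⊗[K] A) (ε : A →ₗ[K] K)
    (hcoassoc : ∀ a : A,
      (TensorProduct.assoc K A A A)
          ((TensorProduct.map δ (LinearMap.id : A →ₗ[K] A)) (δ a)) =
        (TensorProduct.map (LinearMap.id : A →ₗ[K] A) δ) (δ a))
    (hcounit_l : ∀ a : A,
      (TensorProduct.lid K A)
          ((TensorProduct.map ε (LinearMap.id : A →ₗ[K] A)) (δ a)) = a)
    (hcounit_r : ∀ a : A,
      (TensorProduct.rid K A)
          ((TensorProduct.map (LinearMap.id : A →ₗ[K] A) ε) (δ a)) = a)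
    (hbimod : ∀ a x b : A,
      δ (a * x * b) =
        (TensorProduct.map (LinearMap.mulLeft K a) (LinearMap.mulRight K b)) (δ x))
    {M : Type*} [AddCommGroup M] [Module K M] (m : M ⊗[K] A →ₗ[K] M)
    (hm_assoc : ∀ (x : M) (a b : A), m (m (x ⊗ₜ[K] a) ⊗ₜ[K] b) = m (x ⊗ₜ[K] (a * b)))
    (hm_one : ∀ x : M, m (x ⊗ₜ[K] (1 : A)) = x)
    {N : Type*} [AddCommGroup N] [Module K N] (n : A ⊗[K] N →ₗ[K] N)
    (hn_assoc : ∀ (a b : A) (y : N), n (a ⊗ₜ[K] n (b ⊗ₜ[K] y)) = n ((a * b) ⊗ₜ[K] y))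
    (hn_one : ∀ y : N, n ((1 : A) ⊗ₜ[K] y) = y) :
    ∃ e : HomAe δ m n ≃ₗ[K] LinearMap.ker (cophi δ m n),
      ∀ f : HomAe δ m n,
        (e f : M ⊗[K] N) =
          (TensorProduct.comm K N M)
            ((f : Dsub δ →ₗ[K] N ⊗[K] M)
              ⟨(TensorProduct.comm K A A) (δ 1), Tdelta_mem_Dsub δ⟩) := by
  classical
  obtain ⟨S, hS⟩ := TensorProduct.exists_finset (δ 1)
  have hδl : ∀ a : A, δ a = ∑ p ∈ S, (a * p.1) ⊗ₜ[K] p.2 := by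
    intro a
    have h := hbimod a 1 1
    rw [mul_one, mul_one] at h
    rw [h, hS, map_sum]
    simp
  have hδr : ∀ a : A, δ a = ∑ p ∈ S, p.1 ⊗ₜ[K] (p.2 * a) := by
    intro a
    have h := hbimod 1 1 a
    rw [one_mul, one_mul] at h
    rw [h, hS, map_sum]
    simp
  have hP1 : ∀ a : A, ∑ p ∈ S, ε (a * p.1) • p.2 = a := by
    intro a
    have h := hcounit_l a
    rw [hδl a, map_sum, map_sum] at h
    simpa using h
  have hP2 : ∀ a : A, ∑ p ∈ S, ε (p.2 * a) • p.1 = a := by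
    intro a
    have h := hcounit_r a
    rw [hδr a, map_sum, map_sum] at h
    simpa using h
  set ρ : A → A := fun a => ∑ p ∈ S, ε (a * p.2) • p.1 with hρdef
  have hdag : ∀ a b : A, ε (b * ρ a) = ε (a * b) := by
    intro a b
    have h1 : ε (b * ρ a) = ∑ p ∈ S, ε (a * p.2) * ε (b * p.1) := by
      rw [hρdef]
      simp only [Finset.mul_sum, mul_smul_comm, map_sum, map_smul, smul_eq_mul]
    have h2 : ε (a * b) = ∑ p ∈ S, ε (b * p.1) * ε (a * p.2) := by
      conv_lhs => rw [← hP1 b]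
      simp only [Finset.mul_sum, mul_smul_comm, map_sum, map_smul, smul_eq_mul]
    rw [h1, h2]
    exact Finset.sum_congr rfl fun p _ => mul_comm _ _
  have hND : ∀ u v : A, (∀ b : A, ε (b * u) = ε (b * v)) → u = v := by
    intro u v h
    rw [← hP2 u, ← hP2 v]
    exact Finset.sum_congr rfl fun p _ => by rw [h p.2]
  have hρmul : ∀ x y : A, ρ (x * y) = ρ x * ρ y := by
    intro x y
    apply hND
    intro b
    rw [hdag (x * y) b, ← mul_assoc b, hdag y (b * ρ x), ← mul_assoc y, hdag x (y * b), mul_assoc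
      ]
  have hsurjD : ∀ ξ : Module.Dual K A, ∃ a : A, ∀ b, ξ b = ε (a * b) := by
    set L : A →ₗ[K] Module.Dual K A := (LinearMap.mul K A).compr₂ ε with hL
    have hinjL : Function.Injective L := by
      intro a a' h
      rw [← hP1 a, ← hP1 a']
      refine Finset.sum_congr rfl fun p _ => ?_
      have := LinearMap.congr_fun h p.1
      simp only [hL, LinearMap.compr₂_apply, LinearMap.mul_apply'] at this
      rw [this]
    have hsurjL : Function.Surjective L :=
      (LinearMap.injective_iff_surjective_of_finrank_eq_finrank
        (Subspace.dual_finrank_eq).symm).mp hinjL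
    intro ξ
    obtain ⟨a, rfl⟩ := hsurjL ξ
    exact ⟨a, fun b => by simp [hL, LinearMap.compr₂_apply, LinearMap.mul_apply']⟩
  set t : A ⊗[K] A := (TensorProduct.comm K A A) (δ 1) with htdef
  have ht : t = ∑ p ∈ S, p.2 ⊗ₜ[K] p.1 := by
    rw [htdef, hS, map_sum]; simp
  have hI : ∀ a : A,
      TensorProduct.map (LinearMap.mulLeft K a) LinearMap.id t =
        TensorProduct.map LinearMap.id (LinearMap.mulRight K (ρ a)) t := by
    intro a
    rw [← sub_eq_zero]
    apply detect_zero
    intro ξ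
    obtain ⟨y, hy⟩ := hsurjD ξ
    rw [map_sub, map_sub]
    have h1 : (TensorProduct.lid K A) ((TensorProduct.map ξ LinearMap.id)
        ((TensorProduct.map (LinearMap.mulLeft K a) LinearMap.id) t)) = ρ (y * a) := by
      rw [ht]
      simp only [map_sum, TensorProduct.map_tmul, LinearMap.mulLeft_apply, LinearMap.id_coe,
        id_eq, TensorProduct.lid_tmul, hy]
      rw [hρdef]
      exact Finset.sum_congr rfl fun p _ => by rw [← mul_assoc]
    have h2 : (TensorProduct.lid K A) ((TensorProduct.map ξ LinearMap.id)
        ((TensorProduct.map LinearMap.id (LinearMap.mulRight K (ρ a))) t)) = ρ y * ρ a := by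
      rw [ht]
      simp only [map_sum, TensorProduct.map_tmul, LinearMap.mulRight_apply, LinearMap.id_coe,
        id_eq, TensorProduct.lid_tmul, hy]
      rw [hρdef, Finset.sum_mul]
      exact Finset.sum_congr rfl fun p _ => (smul_mul_assoc _ _ _).symm
    rw [h1, h2, hρmul, sub_self]
  have hρ_apply : ∀ a : A, ρ a = ∑ p ∈ S, ε (a * p.2) • p.1 := fun a => by rw [hρdef]
  have hnablaR : ∀ x : M, nablaR δ m x = ∑ p ∈ S, m (x ⊗ₜ[K] p.1) ⊗ₜ[K] p.2 := by
    intro x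
    simp only [nablaR, LinearMap.coe_comp, Function.comp_apply, LinearMap.flip_apply,
      TensorProduct.mk_apply, LinearEquiv.coe_coe, TensorProduct.map_tmul, LinearMap.id_coe,
      id_eq]
    rw [hS, TensorProduct.tmul_sum, map_sum, map_sum]
    exact Finset.sum_congr rfl fun p _ => by
      simp [TensorProduct.assoc_symm_tmul]
  have hnablaL : ∀ y : N, nablaL δ n y = ∑ p ∈ S, p.1 ⊗ₜ[K] n (p.2 ⊗ₜ[K] y) := by
    intro y
    simp only [nablaL, LinearMap.coe_comp, Function.comp_apply,
      TensorProduct.mk_apply, LinearEquiv.coe_coe, TensorProduct.map_tmul, LinearMap.id_coe,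
      id_eq]
    rw [hS, TensorProduct.sum_tmul, map_sum, map_sum]
    exact Finset.sum_congr rfl fun p _ => by
      simp [TensorProduct.assoc_tmul]
  have hcophi : ∀ (x : M) (y : N), cophi δ m n (x ⊗ₜ[K] y) =
      (∑ p ∈ S, m (x ⊗ₜ[K] p.1) ⊗ₜ[K] (p.2 ⊗ₜ[K] y)) -
        ∑ p ∈ S, x ⊗ₜ[K] (p.1 ⊗ₜ[K] n (p.2 ⊗ₜ[K] y)) := by
    intro x y
    simp only [cophi, LinearMap.sub_apply, LinearMap.coe_comp, Function.comp_apply,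
      LinearEquiv.coe_coe, TensorProduct.map_tmul, LinearMap.id_coe, id_eq]
    rw [hnablaR, hnablaL, TensorProduct.sum_tmul, map_sum, TensorProduct.tmul_sum]
    congr 1
  set Ca : A → (M ⊗[K] (A ⊗[K] N) →ₗ[K] M ⊗[K] N) := fun a =>
    TensorProduct.map LinearMap.id
      ((TensorProduct.lid K N).toLinearMap ∘ₗ
        TensorProduct.map (ε ∘ₗ LinearMap.mulLeft K a) LinearMap.id) with hCadef
  have hCa_tmul : ∀ (a : A) (x : M) (c : A) (y : N),
      Ca a (x ⊗ₜ[K] (c ⊗ₜ[K] y)) = ε (a * c) • (x ⊗ₜ[K] y) := by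
    intro a x c y
    simp [hCadef, TensorProduct.tmul_smul]
  have hCa_phi : ∀ (a : A) (z : M ⊗[K] N), Ca a (cophi δ m n z) =
      TensorProduct.map (rAct m (ρ a)) LinearMap.id z -
        TensorProduct.map LinearMap.id (lAct n a) z := by
    intro a z
    induction z using TensorProduct.induction_on with
    | zero => simp
    | tmul x y =>
        rw [hcophi, map_sub, map_sum, map_sum]
        simp only [hCa_tmul]
        have e1 : ∑ p ∈ S, ε (a * p.2) • (m (x ⊗ₜ[K] p.1) ⊗ₜ[K] y) =
            TensorProduct.map (rAct m (ρ a)) LinearMap.id (x ⊗ₜ[K] y) := by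
          simp only [TensorProduct.map_tmul, LinearMap.id_coe, id_eq, rAct,
            LinearMap.coe_comp, Function.comp_apply, LinearMap.flip_apply,
            TensorProduct.mk_apply]
          have hx1 : x ⊗ₜ[K] ρ a = ∑ p ∈ S, ε (a * p.2) • (x ⊗ₜ[K] p.1) := by
            rw [hρ_apply, TensorProduct.tmul_sum]
            exact Finset.sum_congr rfl fun p _ => TensorProduct.tmul_smul _ _ _
          rw [hx1, map_sum, TensorProduct.sum_tmul]
          refine Finset.sum_congr rfl fun p _ => ?_
          rw [map_smul, TensorProduct.smul_tmul']
        have e2 : ∑ p ∈ S, ε (a * p.1) • (x ⊗ₜ[K] n (p.2 ⊗ₜ[K] y)) =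
            TensorProduct.map LinearMap.id (lAct n a) (x ⊗ₜ[K] y) := by
          simp only [TensorProduct.map_tmul, LinearMap.id_coe, id_eq, lAct,
            LinearMap.coe_comp, Function.comp_apply, TensorProduct.mk_apply]
          conv_rhs => rw [← hP1 a]
          have hy1 : (∑ p ∈ S, ε (a * p.1) • p.2) ⊗ₜ[K] y =
              ∑ p ∈ S, ε (a * p.1) • (p.2 ⊗ₜ[K] y) := by
            rw [TensorProduct.sum_tmul]
            exact Finset.sum_congr rfl fun p _ => (TensorProduct.smul_tmul' _ _ _).symm
          rw [hy1, map_sum, TensorProduct.tmul_sum]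
          refine Finset.sum_congr rfl fun p _ => ?_
          rw [map_smul, TensorProduct.tmul_smul]
        rw [e1, e2]
    | add u v hu hv =>
        rw [map_add, map_add, hu, hv, map_add, map_add]
        abel
  have hstar_of_ker : ∀ z : M ⊗[K] N, cophi δ m n z = 0 → ∀ a : A,
      TensorProduct.map (rAct m (ρ a)) LinearMap.id z =
        TensorProduct.map LinearMap.id (lAct n a) z := by
    intro z hz a
    have h := hCa_phi a z
    rw [hz, map_zero] at h
    exact (sub_eq_zero.mp h.symm)
  have hker_of_star : ∀ z : M ⊗[K] N,
      (∀ a : A, TensorProduct.map (rAct m (ρ a)) LinearMap.id z =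
        TensorProduct.map LinearMap.id (lAct n a) z) → cophi δ m n z = 0 := by
    intro z hz
    have h0 : ∀ ξ : Module.Dual K A, (TensorProduct.lid K (M ⊗[K] N))
        ((TensorProduct.map ξ LinearMap.id)
          ((TensorProduct.leftComm K M A N) (cophi δ m n z))) = 0 := by
      intro ξ
      obtain ⟨a, ha⟩ := hsurjD ξ
      have hcc : ∀ u : M ⊗[K] (A ⊗[K] N), (TensorProduct.lid K (M ⊗[K] N))
          ((TensorProduct.map ξ LinearMap.id) ((TensorProduct.leftComm K M A N) u)) =
          Ca a u := by
        intro u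
        induction u using TensorProduct.induction_on with
        | zero => simp
        | tmul x w =>
            induction w using TensorProduct.induction_on with
            | zero => simp
            | tmul c y =>
                rw [hCa_tmul]
                simp [TensorProduct.leftComm_tmul, ha]
            | add w1 w2 h1 h2 =>
                simp only [TensorProduct.tmul_add, map_add, h1, h2]
        | add u v hu hv => simp only [map_add, hu, hv]
      rw [hcc, hCa_phi, hz a, sub_self]
    have hlc := detect_zero _ h0
    exact ((TensorProduct.leftComm K M A N).map_eq_zero_iff).mp hlc
  have hrAct_one : rAct m 1 = LinearMap.id := LinearMap.ext fun x => by
    simp [rAct, hm_one]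
  have hlAct_one : lAct n 1 = LinearMap.id := LinearMap.ext fun y => by
    simp [lAct, hn_one]
  have htδmem : t ∈ Dsub δ := htdef ▸ Tdelta_mem_Dsub δ
  set tδel : Dsub δ := ⟨(TensorProduct.comm K A A) (δ 1), Tdelta_mem_Dsub δ⟩ with htδel
  -- the evaluation map
  set ev : ↥(HomAe δ m n) →ₗ[K] M ⊗[K] N :=
    { toFun := fun F => (TensorProduct.comm K N M) (F.1 tδel)
      map_add' := fun F G => by
        simp only [Submodule.coe_add, LinearMap.add_apply, map_add]
      map_smul' := fun c F => by
        simp only [SetLike.val_smul, LinearMap.smul_apply, map_smul, RingHom.id_apply] } with hev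
  -- forward: values lie in the kernel of φ
  have hstarF : ∀ (F : ↥(HomAe δ m n)) (a : A),
      TensorProduct.map (lAct n a) LinearMap.id (F.1 tδel) =
        TensorProduct.map LinearMap.id (rAct m (ρ a)) (F.1 tδel) := by
    intro F a
    have h1 := F.2 a 1 tδel
    have h2 := F.2 1 (ρ a) tδel
    have harg : (⟨TensorProduct.map (LinearMap.mulLeft K a) (LinearMap.mulRight K 1) tδel.1,
        Dsub_action_mem δ a 1 tδel.2⟩ : Dsub δ) =
        ⟨TensorProduct.map (LinearMap.mulLeft K 1) (LinearMap.mulRight K (ρ a)) tδel.1,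
        Dsub_action_mem δ 1 (ρ a) tδel.2⟩ := by
      apply Subtype.ext
      simp only [LinearMap.mulLeft_one, LinearMap.mulRight_one]
      exact hI a
    rw [harg, h2] at h1
    rw [hrAct_one] at h1
    rw [hlAct_one] at h1
    exact h1.symm
  have hker_ev : ∀ F : ↥(HomAe δ m n), ev F ∈ LinearMap.ker (cophi δ m n) := by
    intro F
    rw [LinearMap.mem_ker]
    apply hker_of_star
    intro a
    have h := congrArg (TensorProduct.comm K N M) (hstarF F a)
    rw [comm_map_map, comm_map_map] at h
    exact h.symm
  -- injectivity
  have hinj : Function.Injective ev := by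
    intro F G h
    have hpt : F.1 tδel = G.1 tδel := (TensorProduct.comm K N M).injective h
    apply Subtype.ext
    apply LinearMap.ext
    rintro ⟨x, hx⟩
    induction hx using Submodule.span_induction with
    | mem u hu =>
        obtain ⟨a, b, rfl⟩ := hu
        have hF := F.2 a b tδel
        have hG := G.2 a b tδel
        exact hF.trans (by rw [hpt]; exact hG.symm)
    | zero =>
        show F.1 0 = G.1 0
        rw [map_zero, map_zero]
    | add x y hxm hym ihx ihy =>
        show F.1 (⟨x, hxm⟩ + ⟨y, hym⟩) = G.1 (⟨x, hxm⟩ + ⟨y, hym⟩)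
        rw [map_add, map_add, ihx, ihy]
    | smul c x hxm ihx =>
        show F.1 (c • ⟨x, hxm⟩) = G.1 (c • ⟨x, hxm⟩)
        rw [map_smul, map_smul, ihx]
  -- surjectivity
  have hsurj_ev : ∀ z ∈ LinearMap.ker (cophi δ m n), ∃ F : ↥(HomAe δ m n), ev F = z := by
    intro z hz
    rw [LinearMap.mem_ker] at hz
    set Tz : N ⊗[K] M := (TensorProduct.comm K M N) z with hTzdef
    have hstarz : ∀ a : A, TensorProduct.map LinearMap.id (rAct m (ρ a)) Tz =
        TensorProduct.map (lAct n a) LinearMap.id Tz := by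
      intro a
      have h := congrArg (TensorProduct.comm K M N) (hstar_of_ker z hz a)
      rw [comm_map_map, comm_map_map] at h
      exact h
    set G2 : (N ⊗[K] M) ⊗[K] A →ₗ[K] N ⊗[K] M :=
      TensorProduct.map LinearMap.id m ∘ₗ (TensorProduct.assoc K N M A).toLinearMap with hG2def
    have hG2_tmul : ∀ (y : N) (x : M) (c : A),
        G2 ((y ⊗ₜ[K] x) ⊗ₜ[K] c) = y ⊗ₜ[K] m (x ⊗ₜ[K] c) := by
      intro y x c
      simp [hG2def, TensorProduct.assoc_tmul]
    have hK1 : ∀ (w : N ⊗[K] M) (s b : A),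
        G2 (w ⊗ₜ[K] (s * b)) =
          TensorProduct.map LinearMap.id (rAct m b) (G2 (w ⊗ₜ[K] s)) := by
      intro w s b
      induction w using TensorProduct.induction_on with
      | zero => simp
      | tmul y x =>
          rw [hG2_tmul, hG2_tmul]
          simp only [TensorProduct.map_tmul, LinearMap.id_coe, id_eq, rAct,
            LinearMap.coe_comp, Function.comp_apply, LinearMap.flip_apply,
            TensorProduct.mk_apply]
          rw [hm_assoc]
      | add u v hu hv =>
          simp only [TensorProduct.add_tmul, map_add, hu, hv]
    have hK2 : ∀ (w : N ⊗[K] M) (c s : A),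
        G2 (w ⊗ₜ[K] (c * s)) =
          G2 ((TensorProduct.map LinearMap.id (rAct m c) w) ⊗ₜ[K] s) := by
      intro w c s
      induction w using TensorProduct.induction_on with
      | zero => simp
      | tmul y x =>
          simp only [TensorProduct.map_tmul, LinearMap.id_coe, id_eq, rAct,
            LinearMap.coe_comp, Function.comp_apply, LinearMap.flip_apply,
            TensorProduct.mk_apply]
          rw [hG2_tmul, hG2_tmul, hm_assoc]
      | add u v hu hv =>
          simp only [TensorProduct.add_tmul, map_add, hu, hv]
    have hK3 : ∀ (w : N ⊗[K] M) (a s : A),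
        G2 ((TensorProduct.map (lAct n a) LinearMap.id w) ⊗ₜ[K] s) =
          TensorProduct.map (lAct n a) LinearMap.id (G2 (w ⊗ₜ[K] s)) := by
      intro w a s
      induction w using TensorProduct.induction_on with
      | zero => simp
      | tmul y x =>
          simp only [TensorProduct.map_tmul, LinearMap.id_coe, id_eq]
          rw [hG2_tmul, hG2_tmul]
          simp [TensorProduct.map_tmul]
      | add u v hu hv =>
          simp only [TensorProduct.add_tmul, map_add, hu, hv]
    have hK4 : ∀ w : N ⊗[K] M, G2 (w ⊗ₜ[K] (1 : A)) = w := by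
      intro w
      induction w using TensorProduct.induction_on with
      | zero => simp
      | tmul y x => rw [hG2_tmul, hm_one]
      | add u v hu hv => simp only [TensorProduct.add_tmul, map_add, hu, hv]
    set Λ : A ⊗[K] A →ₗ[K] A :=
      (TensorProduct.lid K A).toLinearMap ∘ₗ TensorProduct.map ε LinearMap.id with hΛdef
    set fz : A ⊗[K] A →ₗ[K] N ⊗[K] M :=
      G2 ∘ₗ (TensorProduct.mk K (N ⊗[K] M) A Tz) ∘ₗ Λ with hfzdef
    have hfz_apply : ∀ u : A ⊗[K] A, fz u = G2 (Tz ⊗ₜ[K] Λ u) := by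
      intro u
      simp [hfzdef]
    have hΛgen : ∀ c d : A,
        Λ (TensorProduct.map (LinearMap.mulLeft K c) (LinearMap.mulRight K d) t) =
          ρ c * d := by
      intro c d
      rw [ht, map_sum, map_sum, hρ_apply, Finset.sum_mul]
      refine Finset.sum_congr rfl fun p _ => ?_
      simp only [TensorProduct.map_tmul, LinearMap.mulLeft_apply, LinearMap.mulRight_apply,
        hΛdef, LinearMap.coe_comp, Function.comp_apply, LinearEquiv.coe_coe,
        LinearMap.id_coe, id_eq, TensorProduct.lid_tmul]
      rw [smul_mul_assoc]
    have hfzgen : ∀ c d : A,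
        fz (TensorProduct.map (LinearMap.mulLeft K c) (LinearMap.mulRight K d) t) =
          G2 (Tz ⊗ₜ[K] (ρ c * d)) := by
      intro c d
      rw [hfz_apply, hΛgen]
    have hmapmap : ∀ (q : N ⊗[K] M) (a b : A),
        TensorProduct.map LinearMap.id (rAct m b)
            (TensorProduct.map (lAct n a) LinearMap.id q) =
          TensorProduct.map (lAct n a) (rAct m b) q := by
      intro q a b
      rw [← LinearMap.comp_apply, ← TensorProduct.map_comp]
      simp
    have hequiv : ∀ (a b : A) (x : A ⊗[K] A), x ∈ Dsub δ →
        fz (TensorProduct.map (LinearMap.mulLeft K a) (LinearMap.mulRight K b) x) =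
          TensorProduct.map (lAct n a) (rAct m b) (fz x) := by
      intro a b x hx
      induction hx using Submodule.span_induction with
      | mem u hu =>
          obtain ⟨c, d, rfl⟩ := hu
          rw [show (TensorProduct.map (LinearMap.mulLeft K a) (LinearMap.mulRight K b))
              ((TensorProduct.map (LinearMap.mulLeft K c) (LinearMap.mulRight K d))
                ((TensorProduct.comm K A A) (δ 1))) =
              (TensorProduct.map (LinearMap.mulLeft K (a * c))
                (LinearMap.mulRight K (d * b))) t from by
            rw [htdef, LinearMap.mulLeft_mul, LinearMap.mulRight_mul, TensorProduct.map_comp,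
              LinearMap.comp_apply]]
          rw [hfzgen, show (TensorProduct.map (LinearMap.mulLeft K c)
              (LinearMap.mulRight K d)) ((TensorProduct.comm K A A) (δ 1)) =
              (TensorProduct.map (LinearMap.mulLeft K c) (LinearMap.mulRight K d)) t from by
            rw [htdef], hfzgen]
          rw [hρmul]
          have hassoc : ρ a * ρ c * (d * b) = (ρ a * (ρ c * d)) * b := by
            rw [← mul_assoc, mul_assoc (ρ a) (ρ c) d]
          rw [hassoc, hK1, hK2, hstarz, hK3, hmapmap]
      | zero => simp
      | add u v hum hvm ihu ihv => simp only [map_add, ihu, ihv]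
      | smul k u hum ihu => simp only [map_smul, ihu]
    have hmem : (fz ∘ₗ (Dsub δ).subtype) ∈ HomAe δ m n := by
      intro a b u
      exact hequiv a b u.1 u.2
    refine ⟨⟨fz ∘ₗ (Dsub δ).subtype, hmem⟩, ?_⟩
    show (TensorProduct.comm K N M) (fz tδel.1) = z
    have hΛt : Λ t = 1 := by
      have h := hP2 1
      rw [ht, map_sum]
      simp only [hΛdef, LinearMap.coe_comp, Function.comp_apply, LinearEquiv.coe_coe,
        TensorProduct.map_tmul, LinearMap.id_coe, id_eq, TensorProduct.lid_tmul]
      simpa using h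
    have h1 : fz tδel.1 = Tz := by
      have : (tδel.1 : A ⊗[K] A) = t := by rw [htδel, htdef]
      rw [this, hfz_apply, hΛt, hK4]
    rw [h1, hTzdef, comm_comm_apply]
  -- assemble
  have hbij : Function.Bijective
      (LinearMap.codRestrict (LinearMap.ker (cophi δ m n)) ev hker_ev) := by
    constructor
    · intro F G h
      exact hinj (congrArg Subtype.val h)
    · rintro ⟨zz, hzz⟩
      obtain ⟨F, hF⟩ := hsurj_ev zz hzz
      exact ⟨F, Subtype.ext hF⟩
  exact ⟨LinearEquiv.ofBijective
    (LinearMap.codRestrict (LinearMap.ker (cophi δ m n)) ev hker_ev) hbij, fun F => rfl⟩
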